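/- arXiv:2302.04830 — 4 statements merged into one kernel-verified Lean document; each statement's English description precedes it below -/
import Mathlib

section
/- For |q| > 1 (equivalently, substituting q^{-1} with |q^{-1}|<1) and any complex numbers c, t, the infinite product ∏_{j≥1} (1 - c t q^{-j}) equals the sum ∑_{m≥0} (ct)^m / (q;q)_m, where (q;q)_m = (1-q)(1-q^2)···(1-q^m). -/
/-!
The series `e_q(x) = ∑ x^m / (q;q)_m` satisfies `e_q(q x) = (1 - x) e_q(x)`, because
`(1 - q^m) / (q;q)_m = 1 / (q;q)_{m-1}` telescopes `e_q(x) - e_q(q x)` into `x e_q(x)`.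
Iterating, `e_q(y) = ∏_{j=1}^N (1 - y q^{-j}) · e_q(y q^{-N})`, and for `|q| > 1` the last factor
tends to `e_q(0) = 1`.
-/

/-- The q-Pochhammer symbol `(q;q)_m = (1-q)(1-q^2)⋯(1-q^m)`. -/
noncomputable def qqPoch (q : ℂ) (m : ℕ) : ℂ := ∏ i ∈ Finset.range m, (1 - q ^ (i + 1))

open Finset Filter Topology

noncomputable def qExp (q x : ℂ) : ℂ := ∑' m : ℕ, x ^ m / qqPoch q m

lemma qqPoch_succ (q : ℂ) (m : ℕ) : qqPoch q (m + 1) = qqPoch q m * (1 - q ^ (m + 1)) :=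
  prod_range_succ _ _

lemma qExp_zero (q : ℂ) : qExp q 0 = 1 := by
  rw [qExp, tsum_eq_single 0 fun m hm => by simp [zero_pow hm]]
  simp [qqPoch]

section

variable {q : ℂ}

lemma norm_inv_lt_one_of_one_lt_norm (hq : 1 < ‖q‖) : ‖q⁻¹‖ < 1 := by
  rw [norm_inv]
  exact inv_lt_one_of_one_lt₀ hq

lemma one_sub_pow_ne_zero (hq : 1 < ‖q‖) {n : ℕ} (hn : n ≠ 0) : 1 - q ^ n ≠ 0 := by
  rw [sub_ne_zero]
  intro h
  have := congrArg norm h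
  rw [norm_one, norm_pow] at this
  exact (one_lt_pow₀ hq hn).ne this

lemma qqPoch_ne_zero (hq : 1 < ‖q‖) (m : ℕ) : qqPoch q m ≠ 0 :=
  prod_ne_zero_iff.mpr fun i _ => one_sub_pow_ne_zero hq i.succ_ne_zero

lemma summable_norm_pow_div_qqPoch (hq : 1 < ‖q‖) (x : ℂ) :
    Summable fun m : ℕ => ‖x ^ m / qqPoch q m‖ := by
  refine summable_of_ratio_norm_eventually_le one_half_lt_one ?_
  have hlarge : ∀ᶠ m : ℕ in atTop, 2 * ‖x‖ + 1 ≤ ‖q‖ ^ (m + 1) :=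
    ((tendsto_pow_atTop_atTop_of_one_lt hq).comp (tendsto_add_atTop_nat 1)).eventually_ge_atTop _
  filter_upwards [hlarge] with m hm
  have hpos : 0 < ‖1 - q ^ (m + 1)‖ := norm_pos_iff.mpr (one_sub_pow_ne_zero hq m.succ_ne_zero)
  have hratio : ‖x‖ / ‖1 - q ^ (m + 1)‖ ≤ 1 / 2 := by
    have := norm_sub_norm_le (q ^ (m + 1)) 1
    rw [norm_pow, norm_one, norm_sub_rev] at this
    rw [div_le_iff₀ hpos]
    linarith
  have hstep : x ^ (m + 1) / qqPoch q (m + 1) = x / (1 - q ^ (m + 1)) * (x ^ m / qqPoch q m) := by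
    rw [qqPoch_succ, pow_succ, mul_div_mul_comm, mul_comm]
  rw [norm_norm, norm_norm, hstep, norm_mul, norm_div]
  exact mul_le_mul_of_nonneg_right hratio (norm_nonneg _)

lemma summable_pow_div_qqPoch (hq : 1 < ‖q‖) (x : ℂ) :
    Summable fun m : ℕ => x ^ m / qqPoch q m :=
  (summable_norm_pow_div_qqPoch hq x).of_norm

lemma continuousAt_qExp_zero (hq : 1 < ‖q‖) : ContinuousAt (qExp q) 0 := by
  have hbound : ∀ᶠ x in 𝓝 (0 : ℂ), ∀ m : ℕ, ‖x ^ m / qqPoch q m‖ ≤ ‖(1 : ℂ) ^ m / qqPoch q m‖ := by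
    filter_upwards [Metric.closedBall_mem_nhds (0 : ℂ) one_pos] with x hx m
    rw [mem_closedBall_zero_iff] at hx
    simp only [norm_div, norm_pow, norm_one, one_pow]
    gcongr
    exact pow_le_one₀ (norm_nonneg x) hx
  exact tendsto_tsum_of_dominated_convergence (summable_norm_pow_div_qqPoch hq 1)
    (fun m => ((continuous_pow m).div_const _).continuousAt) hbound

lemma qExp_mul_left (hq : 1 < ‖q‖) (x : ℂ) : qExp q (q * x) = (1 - x) * qExp q x := by
  have htelescope : ∀ m : ℕ,
      x ^ (m + 1) / qqPoch q (m + 1) - (q * x) ^ (m + 1) / qqPoch q (m + 1)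
        = x * (x ^ m / qqPoch q m) := by
    intro m
    rw [qqPoch_succ, mul_pow]
    field_simp [qqPoch_ne_zero hq m, one_sub_pow_ne_zero hq m.succ_ne_zero]
    ring
  have hdiff : qExp q x - qExp q (q * x) = x * qExp q x := by
    have hsum := (summable_pow_div_qqPoch hq x).sub (summable_pow_div_qqPoch hq (q * x))
    rw [qExp, qExp, ← (summable_pow_div_qqPoch hq x).tsum_sub (summable_pow_div_qqPoch hq (q * x)),
      ← tsum_mul_left, hsum.tsum_eq_zero_add]
    simp [htelescope]
  linear_combination -hdiff

lemma qExp_eq_prod_mul (hq : 1 < ‖q‖) (y : ℂ) (N : ℕ) :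
    qExp q y = (∏ j ∈ range N, (1 - y * (q ^ (j + 1))⁻¹)) * qExp q (y * (q ^ N)⁻¹) := by
  have hq0 : q ≠ 0 := norm_pos_iff.mp (one_pos.trans hq)
  induction N with
  | zero => simp
  | succ N ih =>
    have hstep := qExp_mul_left hq (y * (q ^ (N + 1))⁻¹)
    rw [show q * (y * (q ^ (N + 1))⁻¹) = y * (q ^ N)⁻¹ by field_simp; ring] at hstep
    rw [ih, hstep, prod_range_succ, mul_assoc]

lemma tendsto_prod_one_sub_mul_inv_pow (hq : 1 < ‖q‖) (y : ℂ) :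
    Tendsto (fun N => ∏ j ∈ range N, (1 - y * (q ^ (j + 1))⁻¹)) atTop (𝓝 (qExp q y)) := by
  have hsmall : Tendsto (fun N : ℕ => y * (q ^ N)⁻¹) atTop (𝓝 0) := by
    simpa only [inv_pow, mul_zero] using
      (tendsto_pow_atTop_nhds_zero_of_norm_lt_one (norm_inv_lt_one_of_one_lt_norm hq)).const_mul y
  have htail : Tendsto (fun N : ℕ => qExp q (y * (q ^ N)⁻¹)) atTop (𝓝 1) := by
    have := (continuousAt_qExp_zero hq).tendsto.comp hsmall
    rwa [qExp_zero] at this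
  have hquot : Tendsto (fun N : ℕ => qExp q y / qExp q (y * (q ^ N)⁻¹)) atTop (𝓝 (qExp q y)) := by
    have := tendsto_const_nhds (x := qExp q y) |>.div htail one_ne_zero
    rwa [div_one] at this
  refine hquot.congr' ?_
  filter_upwards [htail.eventually_ne one_ne_zero] with N hN
  rw [qExp_eq_prod_mul hq y N, mul_div_cancel_right₀ _ hN]

lemma multipliable_one_sub_mul_inv_pow (hq : 1 < ‖q‖) (y : ℂ) :
    Multipliable fun j : ℕ => 1 - y * (q ^ (j + 1))⁻¹ := by
  have hgeom : Summable fun j : ℕ => ‖-(y * (q ^ (j + 1))⁻¹)‖ := by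
    refine ((summable_geometric_of_lt_one (norm_nonneg _)
      (norm_inv_lt_one_of_one_lt_norm hq)).mul_left (‖y‖ * ‖q⁻¹‖)).congr fun j => ?_
    simp only [norm_neg, norm_mul, norm_inv, norm_pow, pow_succ]
    ring
  simpa only [sub_eq_add_neg] using multipliable_one_add_of_summable hgeom

end

/-- Euler's q-exponential identity: for `|q| > 1` and any `c, t ∈ ℂ`,
`∏_{j≥1} (1 - c t q^{-j}) = ∑_{m≥0} (ct)^m / (q;q)_m`. -/
theorem euler_qexp (q c t : ℂ) (hq : 1 < ‖q‖) :
    ∏' j : ℕ, (1 - c * t * (q ^ (j + 1))⁻¹) = ∑' m : ℕ, (c * t) ^ m / qqPoch q m :=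
  tendsto_nhds_unique (multipliable_one_sub_mul_inv_pow hq (c * t)).hasProd.tendsto_prod_nat
    (tendsto_prod_one_sub_mul_inv_pow hq (c * t))
end

section
/- For integers 0 ≤ k ≤ n, ∑_{s=0}^{⌊(n-k)/2⌋} n!/(s!·(k+s)!·(n-k-2s)!) = binomial(n,k) · ∑_{s=0}^{⌊(n-k)/2⌋} [((k-n)/2)_s · ((k-n+1)/2)_s / (k+1)_s] · 4^s/s!, i.e. the multinomial sum equals binomial(n,k) times the truncated hypergeometric series _2F_1((k-n)/2, (k+1-n)/2; k+1; 4). -/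
/-!
The identity holds term by term. By Legendre's duplication formula for rising factorials,
`4^s ((k-n)/2)_s ((k-n+1)/2)_s = (k-n)_{2s} = (n-k)! / (n-k-2s)!`, while
`(k+1)_s = (k+s)! / k!`; multiplying by `binomial(n,k) / s!` gives the multinomial coefficient.
-/

open Finset
open scoped Nat

theorem ascPochhammer_eval_mul_eval_add_half_mul_four_pow {K : Type*} [Field K] [CharZero K]
    (x : K) (s : ℕ) :
    (ascPochhammer K s).eval x * (ascPochhammer K s).eval (x + 1 / 2) * 4 ^ s =
      (ascPochhammer K (2 * s)).eval (2 * x) := by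
  induction s with
  | zero => simp
  | succ s ih =>
    rw [show 2 * (s + 1) = 2 * s + 1 + 1 by ring, ascPochhammer_succ_eval, ascPochhammer_succ_eval,
      ascPochhammer_succ_eval, ascPochhammer_succ_eval, ← ih]
    push_cast
    ring

theorem ascPochhammer_eval_neg_natCast_two_mul {R : Type*} [Ring R] (m s : ℕ) :
    (ascPochhammer R (2 * s)).eval (-(m : R)) = m.descFactorial (2 * s) := by
  rw [ascPochhammer_eval_neg_eq_descPochhammer, descPochhammer_eval_eq_descFactorial, pow_mul,
    neg_one_sq, one_pow, one_mul]

/-- For `0 ≤ k ≤ n`, the multinomial sum `∑_s n!/(s!(k+s)!(n-k-2s)!)` equals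
`binomial(n,k)` times the truncated hypergeometric series
`₂F₁((k-n)/2, (k+1-n)/2; k+1; 4)`. -/
theorem multinomial_sum_eq_hypergeometric (n k : ℕ) (hk : k ≤ n) :
    ∑ s ∈ range ((n - k) / 2 + 1),
        (Nat.factorial n : ℚ) /
          (Nat.factorial s * Nat.factorial (k + s) * Nat.factorial (n - k - 2 * s)) =
      (n.choose k : ℚ) *
        ∑ s ∈ range ((n - k) / 2 + 1),
          ((ascPochhammer ℚ s).eval (((k : ℚ) - n) / 2) *
              (ascPochhammer ℚ s).eval (((k : ℚ) + 1 - n) / 2) /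
            (ascPochhammer ℚ s).eval ((k : ℚ) + 1)) *
            (4 : ℚ) ^ s / Nat.factorial s := by
  rw [mul_sum]
  refine sum_congr rfl fun s hs => ?_
  have h2s : 2 * s ≤ n - k := by rw [mem_range] at hs; omega
  have hnum : (ascPochhammer ℚ s).eval (((k : ℚ) - n) / 2) *
      (ascPochhammer ℚ s).eval (((k : ℚ) + 1 - n) / 2) * 4 ^ s = (n - k).descFactorial (2 * s) := by
    rw [show ((k : ℚ) + 1 - n) / 2 = (k - n) / 2 + 1 / 2 by ring,
      ascPochhammer_eval_mul_eval_add_half_mul_four_pow,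
      show 2 * (((k : ℚ) - n) / 2) = -((n - k : ℕ) : ℚ) by push_cast [Nat.cast_sub hk]; ring,
      ascPochhammer_eval_neg_natCast_two_mul]
  have hden : (ascPochhammer ℚ s).eval ((k : ℚ) + 1) = (k + 1).ascFactorial s := by
    exact_mod_cast ascPochhammer_nat_eq_natCast_ascFactorial ℚ (k + 1) s
  have hn : (n.choose k * k ! * (n - k)! : ℚ) = n ! := by
    exact_mod_cast Nat.choose_mul_factorial_mul_factorial hk
  have hks : (k ! * (k + 1).ascFactorial s : ℚ) = (k + s)! := by
    exact_mod_cast Nat.factorial_mul_ascFactorial k s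
  have hnk : ((n - k - 2 * s)! * (n - k).descFactorial (2 * s) : ℚ) = (n - k)! := by
    exact_mod_cast Nat.factorial_mul_descFactorial h2s
  rw [div_mul_eq_mul_div, hnum, hden, ← hn, ← hks, ← hnk]
  field_simp
end

section
/- For integers 0 ≤ k ≤ n and a real number γ, ∑_{x+y+z+w=n, z-w=k} n!/(x!·y!·z!·w!) · γ^y = ∑_{w=0}^{⌊(n-k)/2⌋} binomial(n; w, w+k, n-k-2w) · (1+γ)^{n-k-2w}, where the left sum is over nonnegative integers x,y,z,w. -/
open Finset

lemma binom_key (n m : ℕ) (hm : m ≤ n) (c γ : ℝ) :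
    (∑ x ∈ range (n+1), ∑ y ∈ range (n+1),
      if x + y = m then c / (Nat.factorial x * Nat.factorial y) * γ ^ y else 0)
    = c / Nat.factorial m * (1 + γ) ^ m := by
  rw [Finset.sum_comm]
  have h1 : ∀ y ∈ range (n+1),
      (∑ x ∈ range (n+1), if x + y = m then c / (Nat.factorial x * Nat.factorial y) * γ ^ y else 0)
      = if y ≤ m then c / (Nat.factorial (m - y) * Nat.factorial y) * γ ^ y else 0 := by
    intro y _
    by_cases hy : y ≤ m
    · rw [if_pos hy, Finset.sum_eq_single (m - y)]
      · rw [if_pos (by omega)]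
      · intro b _ hb; rw [if_neg (by omega)]
      · intro h; exact absurd (mem_range.2 (by omega)) h
    · rw [if_neg hy]
      apply Finset.sum_eq_zero
      intro x _; rw [if_neg (by omega)]
  rw [Finset.sum_congr rfl h1]
  rw [← Finset.sum_subset (Finset.range_subset_range.2 (by omega : m + 1 ≤ n + 1))
      (by intro x _ hx; rw [if_neg (by simp at hx ⊢; omega)])]
  have h2 : ∀ y ∈ range (m+1),
      (if y ≤ m then c / (Nat.factorial (m - y) * Nat.factorial y) * γ ^ y else 0)
      = c / Nat.factorial m * ((m.choose y : ℝ) * γ ^ y) := by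
    intro y hy
    rw [mem_range] at hy
    rw [if_pos (by omega)]
    have hfac : (m.choose y : ℝ) * Nat.factorial y * Nat.factorial (m - y) = Nat.factorial m := by
      exact_mod_cast congrArg (Nat.cast (R := ℝ))
        (Nat.choose_mul_factorial_mul_factorial (show y ≤ m by omega))
    have hmy : (Nat.factorial (m-y) * Nat.factorial y : ℝ) ≠ 0 := by positivity
    have hm' : (Nat.factorial m : ℝ) ≠ 0 := by positivity
    rw [div_mul_eq_mul_div, div_mul_eq_mul_div, div_eq_div_iff hmy hm']
    linear_combination (-(c * γ ^ y)) * hfac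
  rw [Finset.sum_congr rfl h2, ← Finset.mul_sum]
  congr 1
  rw [add_comm 1 γ, add_pow]
  apply Finset.sum_congr rfl
  intro y _
  simp [mul_comm]

lemma swap4 (s : Finset ℕ) (f : ℕ → ℕ → ℕ → ℕ → ℝ) :
    (∑ x ∈ s, ∑ y ∈ s, ∑ z ∈ s, ∑ w ∈ s, f x y z w)
    = ∑ w ∈ s, ∑ z ∈ s, ∑ x ∈ s, ∑ y ∈ s, f x y z w := by
  refine (Finset.sum_congr rfl fun x _ => Finset.sum_congr rfl fun y _ => Finset.sum_comm).trans ?_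
  refine (Finset.sum_congr rfl fun x _ => Finset.sum_comm).trans ?_
  refine Finset.sum_comm.trans ?_
  refine (Finset.sum_congr rfl fun w _ => Finset.sum_congr rfl fun x _ => Finset.sum_comm).trans ?_
  exact Finset.sum_congr rfl fun w _ => Finset.sum_comm

/-- For `0 ≤ k ≤ n` and real `γ`,
`∑_{x+y+z+w=n, z-w=k} n!/(x!y!z!w!) γ^y
  = ∑_w binom(n; w, w+k, n-k-2w) (1+γ)^{n-k-2w}`. -/
theorem multinomial_gamma_sum (n k : ℕ) (hk : k ≤ n) (γ : ℝ) :
    (∑ x ∈ range (n + 1), ∑ y ∈ range (n + 1), ∑ z ∈ range (n + 1), ∑ w ∈ range (n + 1),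
        if x + y + z + w = n ∧ z = w + k then
          (Nat.factorial n : ℝ) /
            (Nat.factorial x * Nat.factorial y * Nat.factorial z * Nat.factorial w) * γ ^ y
        else 0) =
      ∑ w ∈ range ((n - k) / 2 + 1),
        (Nat.factorial n : ℝ) /
          (Nat.factorial w * Nat.factorial (w + k) * Nat.factorial (n - k - 2 * w)) *
          (1 + γ) ^ (n - k - 2 * w) := by
  rw [swap4]
  have hterm : ∀ w ∈ range (n + 1),
      (∑ z ∈ range (n + 1), ∑ x ∈ range (n + 1), ∑ y ∈ range (n + 1),
        if x + y + z + w = n ∧ z = w + k then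
          (Nat.factorial n : ℝ) /
            (Nat.factorial x * Nat.factorial y * Nat.factorial z * Nat.factorial w) * γ ^ y
        else 0)
      = if 2 * w + k ≤ n then
          (Nat.factorial n : ℝ) /
            (Nat.factorial w * Nat.factorial (w + k) * Nat.factorial (n - k - 2 * w)) *
            (1 + γ) ^ (n - k - 2 * w)
        else 0 := by
    intro w _
    by_cases hw : 2 * w + k ≤ n
    · rw [if_pos hw]
      rw [Finset.sum_eq_single (w + k)]
      · have hcongr : ∀ x ∈ range (n+1), ∀ y ∈ range (n+1),
            (if x + y + (w + k) + w = n ∧ w + k = w + k then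
              (Nat.factorial n : ℝ) /
                (Nat.factorial x * Nat.factorial y * Nat.factorial (w+k) * Nat.factorial w) * γ ^ y
            else 0)
            = if x + y = n - k - 2 * w then
                ((Nat.factorial n : ℝ) / (Nat.factorial (w+k) * Nat.factorial w)) /
                  (Nat.factorial x * Nat.factorial y) * γ ^ y
              else 0 := by
          intro x _ y _
          by_cases hc : x + y = n - k - 2 * w
          · rw [if_pos ⟨by omega, rfl⟩, if_pos hc, div_div]
            ring_nf
          · rw [if_neg (fun h => hc (by omega)), if_neg hc]
        rw [Finset.sum_congr rfl fun x hx => Finset.sum_congr rfl fun y hy => hcongr x hx y hy]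
        rw [binom_key n (n - k - 2 * w) (by omega)]
        rw [div_div]
        congr 2
        ring
      · intro z _ hz
        apply Finset.sum_eq_zero; intro x _
        apply Finset.sum_eq_zero; intro y _
        rw [if_neg (by tauto)]
      · intro h
        exact absurd (mem_range.2 (by omega)) h
    · rw [if_neg hw]
      apply Finset.sum_eq_zero; intro z _
      apply Finset.sum_eq_zero; intro x _
      apply Finset.sum_eq_zero; intro y _
      rw [if_neg (by omega)]
  rw [Finset.sum_congr rfl hterm]
  rw [← Finset.sum_subset (Finset.range_subset_range.2 (show (n-k)/2 + 1 ≤ n + 1 by omega))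
      (by intro w _ hw; rw [if_neg (by simp at hw ⊢; omega)])]
  apply Finset.sum_congr rfl
  intro w hw
  rw [mem_range] at hw
  rw [if_pos (by omega)]
end

section
/- Let f(t) be defined by f(t) = √((3-|t|)/(1+|t|)) for 1 < |t| < 3, f(t) = √((3-t)/(1+t)) + √((3+t)/(1-t)) for |t| < 1, and f(t) = 0 otherwise. Then (1/(4π)) ∫_{-3}^{3} f(t) dt = 1, i.e. f/(4π) is a probability density; moreover its odd moments vanish and its even moments satisfy (1/(4π)) ∫_{-3}^{3} t^m f(t) dt = ∑_{i=0}^{m} (-1)^i binomial(m,i) (2i)!/(i!(i+1)!) for m even. -/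
/-! Away from `t = ±1` the density is `w t + w (-t)` with `w t = √((3 - t) / (1 + t))`, and `w`
vanishes outside `(-1, 3)` because `Real.sqrt` is `0` on nonpositive arguments (and `x / 0 = 0`
at `t = -1`). Hence the `m`-th moment of the density is `1 + (-1) ^ m` times that of `w`.
The substitution `t = 4 sin² v - 1`, `v ∈ (0, π / 2)`, turns `w t dt` into `8 cos² v dv`;
expanding `(1 - 4 sin² v) ^ m` binomially leaves the Wallis-type integrals
`∫₀^{π/2} sin^{2i} v cos² v dv = π Cᵢ / 4^{i+1}`, with `Cᵢ` the Catalan numbers. -/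

open Real Finset

/-- The "Batman" density from the Sato–Tate distribution for the K3 surfaces. -/
noncomputable def batman (t : ℝ) : ℝ :=
  if 1 < |t| ∧ |t| < 3 then Real.sqrt ((3 - |t|) / (1 + |t|))
  else if |t| < 1 then Real.sqrt ((3 - t) / (1 + t)) + Real.sqrt ((3 + t) / (1 - t))
  else 0

open MeasureTheory Set

noncomputable def batmanWing (t : ℝ) : ℝ := √((3 - t) / (1 + t))

lemma batmanWing_eq_zero_of_notMem_Ioo {t : ℝ} (ht : t ∉ Ioo (-1 : ℝ) 3) :
    batmanWing t = 0 := by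
  refine Real.sqrt_eq_zero_of_nonpos ?_
  rcases not_and_or.mp ht with ht | ht
  · exact div_nonpos_of_nonneg_of_nonpos (by linarith) (by linarith)
  · exact div_nonpos_of_nonpos_of_nonneg (by linarith) (by linarith)

lemma batman_eq_batmanWing_add_batmanWing_neg {t : ℝ} (ht : |t| ≠ 1) :
    batman t = batmanWing t + batmanWing (-t) := by
  have hwing (s : ℝ) (hs : s ≤ -1 ∨ 3 ≤ s) : batmanWing s = 0 :=
    batmanWing_eq_zero_of_notMem_Ioo fun h => by rcases hs with hs | hs <;> linarith [h.1, h.2]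
  unfold batman
  split_ifs with hout hin
  · rcases le_or_gt 0 t with h | h
    · rw [abs_of_nonneg h] at hout ⊢
      rw [hwing (-t) (by left; linarith), add_zero, batmanWing]
    · rw [abs_of_neg h] at hout ⊢
      rw [hwing t (by left; linarith), zero_add, batmanWing]
  · rw [batmanWing, batmanWing, sub_neg_eq_add, ← sub_eq_add_neg]
  · have h3 : 3 ≤ |t| := by
      by_contra h
      exact hout ⟨lt_of_le_of_ne (not_lt.mp hin) (Ne.symm ht), not_le.mp h⟩
    rcases le_abs'.mp h3 with h | h
    · rw [hwing t (by left; linarith), hwing (-t) (by right; linarith), add_zero]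
    · rw [hwing t (by right; linarith), hwing (-t) (by left; linarith), add_zero]

lemma batman_ae_eq_batmanWing_add_batmanWing_neg :
    batman =ᵐ[volume] fun t => batmanWing t + batmanWing (-t) := by
  have hnull : volume {t : ℝ | |t| = 1} = 0 :=
    measure_mono_null (fun t ht => by simpa [abs_eq zero_le_one] using ht)
      ((Set.toFinite {1, -1}).measure_zero volume)
  filter_upwards [measure_eq_zero_iff_ae_notMem.mp hnull] with t ht
  exact batman_eq_batmanWing_add_batmanWing_neg ht

lemma sin_mul_batmanWing_four_mul_sin_sq_sub_one {v : ℝ} (hs : 0 < sin v) (hc : 0 ≤ cos v) :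
    sin v * batmanWing (4 * sin v ^ 2 - 1) = cos v := by
  have : (3 - (4 * sin v ^ 2 - 1)) / (1 + (4 * sin v ^ 2 - 1)) = (cos v / sin v) ^ 2 := by
    rw [div_pow, cos_sq']
    field_simp
    ring
  rw [batmanWing, this, Real.sqrt_sq (div_nonneg hc hs.le)]
  field_simp

lemma hasDerivAt_four_mul_sin_sq_sub_one (v : ℝ) :
    HasDerivAt (fun v => 4 * sin v ^ 2 - 1) (8 * sin v * cos v) v :=
  ((((hasDerivAt_sin v).pow 2).const_mul 4).sub_const 1).congr_deriv (by ring)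

lemma eqOn_mul_batmanWing_four_mul_sin_sq_sub_one (φ : ℝ → ℝ) :
    EqOn (fun v => 8 * sin v * cos v * (φ (4 * sin v ^ 2 - 1) * batmanWing (4 * sin v ^ 2 - 1)))
      (fun v => 8 * cos v ^ 2 * φ (4 * sin v ^ 2 - 1)) (Ioo 0 (π / 2)) := by
  intro v hv
  have hs : 0 < sin v := sin_pos_of_pos_of_lt_pi hv.1 (by linarith [hv.2, pi_pos])
  have hc : 0 ≤ cos v := cos_nonneg_of_mem_Icc ⟨by linarith [hv.1, pi_pos], hv.2.le⟩
  linear_combination 8 * cos v * φ (4 * sin v ^ 2 - 1) *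
    sin_mul_batmanWing_four_mul_sin_sq_sub_one hs hc

lemma deriv_four_mul_sin_sq_sub_one_nonneg (v : ℝ) (hv : v ∈ Ioo 0 (π / 2)) :
    0 ≤ 8 * sin v * cos v := by
  have := sin_pos_of_pos_of_lt_pi hv.1 (by linarith [hv.2, pi_pos])
  have := cos_nonneg_of_mem_Icc ⟨by linarith [hv.1, pi_pos], hv.2.le⟩
  positivity

lemma integral_Icc_mul_batmanWing (φ : ℝ → ℝ) :
    ∫ t in Icc (-1) 3, φ t * batmanWing t =
      ∫ v in Icc 0 (π / 2), 8 * cos v ^ 2 * φ (4 * sin v ^ 2 - 1) := by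
  have h := integral_Icc_deriv_smul_of_deriv_nonneg (g := fun t => φ t * batmanWing t)
    (by fun_prop) (fun v _ => hasDerivAt_four_mul_sin_sq_sub_one v)
    deriv_four_mul_sin_sq_sub_one_nonneg (by positivity)
  norm_num at h
  rw [← h, integral_Icc_eq_integral_Ioo, integral_Icc_eq_integral_Ioo]
  exact setIntegral_congr_fun measurableSet_Ioo (eqOn_mul_batmanWing_four_mul_sin_sq_sub_one φ)

lemma integrableOn_Icc_mul_batmanWing {φ : ℝ → ℝ} (hφ : Continuous φ) :
    IntegrableOn (fun t => φ t * batmanWing t) (Icc (-1) 3) := by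
  have h := integrableOn_Icc_deriv_smul_iff_of_deriv_nonneg (g := fun t => φ t * batmanWing t)
    (by fun_prop) (fun v _ => hasDerivAt_four_mul_sin_sq_sub_one v)
    deriv_four_mul_sin_sq_sub_one_nonneg (by positivity)
  norm_num at h
  rw [← h, integrableOn_Icc_iff_integrableOn_Ioo,
    integrableOn_congr_fun (eqOn_mul_batmanWing_four_mul_sin_sq_sub_one φ) measurableSet_Ioo]
  exact (Continuous.integrableOn_Icc (by fun_prop)).mono_set Ioo_subset_Icc_self

lemma integrable_pow_mul_batmanWing (m : ℕ) : Integrable fun t : ℝ => t ^ m * batmanWing t :=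
  (integrableOn_Icc_mul_batmanWing (continuous_pow m)).integrable_of_forall_notMem_eq_zero
    fun _ ht => by
      rw [batmanWing_eq_zero_of_notMem_Ioo fun h => ht (Ioo_subset_Icc_self h), mul_zero]

lemma integral_pow_mul_batmanWing (m : ℕ) :
    ∫ t, t ^ m * batmanWing t = ∫ v in 0..π / 2, 8 * cos v ^ 2 * (4 * sin v ^ 2 - 1) ^ m := by
  rw [← setIntegral_eq_integral_of_forall_compl_eq_zero (s := Icc (-1) 3),
    integral_Icc_mul_batmanWing, intervalIntegral.integral_of_le (by positivity),
    integral_Icc_eq_integral_Ioc]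
  intro t ht
  rw [batmanWing_eq_zero_of_notMem_Ioo fun h => ht (Ioo_subset_Icc_self h), mul_zero]

lemma integral_pow_mul_batmanWing_neg (m : ℕ) :
    ∫ t, t ^ m * batmanWing (-t) = (-1) ^ m * ∫ t, t ^ m * batmanWing t := by
  rw [← integral_const_mul, ← integral_neg_eq_self]
  simp only [neg_neg, ← mul_assoc, ← mul_pow, neg_one_mul]

lemma integral_pow_mul_batman (m : ℕ) :
    ∫ t in (-3 : ℝ)..3, t ^ m * batman t = (1 + (-1) ^ m) * ∫ t, t ^ m * batmanWing t := by
  have hint := integrable_pow_mul_batmanWing m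
  have hint_neg : Integrable fun t : ℝ => t ^ m * batmanWing (-t) := by
    simpa only [← mul_assoc, ← mul_pow, neg_one_mul, neg_neg] using
      (hint.const_mul ((-1) ^ m)).comp_neg
  calc ∫ t in (-3 : ℝ)..3, t ^ m * batman t
      = ∫ t in Ioc (-3) 3, t ^ m * (batmanWing t + batmanWing (-t)) := by
        rw [intervalIntegral.integral_of_le (by norm_num)]
        refine integral_congr_ae (ae_restrict_of_ae ?_)
        filter_upwards [batman_ae_eq_batmanWing_add_batmanWing_neg] with t ht
        rw [ht]
    _ = ∫ t, t ^ m * (batmanWing t + batmanWing (-t)) := by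
        refine setIntegral_eq_integral_of_forall_compl_eq_zero fun t ht => ?_
        rw [batmanWing_eq_zero_of_notMem_Ioo fun h => ht ⟨by linarith [h.1], by linarith [h.2]⟩,
          batmanWing_eq_zero_of_notMem_Ioo fun h => ht ⟨by linarith [h.2], by linarith [h.1]⟩,
          add_zero, mul_zero]
    _ = (1 + (-1) ^ m) * ∫ t, t ^ m * batmanWing t := by
        simp only [mul_add]
        rw [integral_add hint hint_neg, integral_pow_mul_batmanWing_neg]
        ring

lemma integral_sin_pow_add_two_zero_pi_div_two (n : ℕ) :
    ∫ x in (0 : ℝ)..π / 2, sin x ^ (n + 2) =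
      (n + 1) / (n + 2) * ∫ x in (0 : ℝ)..π / 2, sin x ^ n := by
  simp [integral_sin_pow]

lemma integral_sin_pow_even_zero_pi_div_two (n : ℕ) :
    ∫ x in (0 : ℝ)..π / 2, sin x ^ (2 * n) =
      π / 2 * (2 * n).factorial / (4 ^ n * n.factorial ^ 2) := by
  induction n with
  | zero => simp
  | succ n ih =>
    rw [mul_add_one, integral_sin_pow_add_two_zero_pi_div_two, ih, Nat.factorial_succ,
      show 2 * n + 2 = (2 * n + 1) + 1 by ring, Nat.factorial_succ, Nat.factorial_succ]
    push_cast
    field_simp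
    ring

lemma integral_sin_pow_even_mul_cos_sq_zero_pi_div_two (n : ℕ) :
    ∫ x in (0 : ℝ)..π / 2, sin x ^ (2 * n) * cos x ^ 2 =
      π / 4 ^ (n + 1) * ((2 * n).factorial / (n.factorial * (n + 1).factorial)) := by
  have hsub : ∫ x in (0 : ℝ)..π / 2, sin x ^ (2 * n) * cos x ^ 2 =
      (∫ x in (0 : ℝ)..π / 2, sin x ^ (2 * n)) -
        ∫ x in (0 : ℝ)..π / 2, sin x ^ (2 * n + 2) := by
    rw [← intervalIntegral.integral_sub
      (Continuous.intervalIntegrable (by fun_prop) _ _)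
      (Continuous.intervalIntegrable (by fun_prop) _ _)]
    congr 1 with x
    rw [cos_sq', pow_add]
    ring
  rw [hsub, integral_sin_pow_add_two_zero_pi_div_two, integral_sin_pow_even_zero_pi_div_two,
    Nat.factorial_succ]
  push_cast
  field_simp
  ring

lemma integral_cos_sq_mul_four_mul_sin_sq_sub_one_pow {m : ℕ} (hm : Even m) :
    ∫ v in (0 : ℝ)..π / 2, 8 * cos v ^ 2 * (4 * sin v ^ 2 - 1) ^ m =
      2 * π * ∑ i ∈ range (m + 1), (-1 : ℝ) ^ i * (m.choose i) *
        (Nat.factorial (2 * i) : ℝ) / (Nat.factorial i * Nat.factorial (i + 1)) := by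
  have hexpand (v : ℝ) : 8 * cos v ^ 2 * (4 * sin v ^ 2 - 1) ^ m =
      ∑ i ∈ range (m + 1),
        8 * (-1) ^ i * 4 ^ i * m.choose i * (sin v ^ (2 * i) * cos v ^ 2) := by
    rw [← hm.neg_pow, neg_sub, sub_eq_neg_add, add_pow, mul_sum]
    refine sum_congr rfl fun i _ => ?_
    rw [one_pow, mul_one, neg_pow, mul_pow, pow_mul]
    ring
  simp_rw [hexpand]
  rw [intervalIntegral.integral_finsetSum fun i _ =>
    Continuous.intervalIntegrable (by fun_prop) _ _, mul_sum]
  refine sum_congr rfl fun i _ => ?_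
  rw [intervalIntegral.integral_const_mul, integral_sin_pow_even_mul_cos_sq_zero_pi_div_two,
    pow_succ]
  field_simp
  ring

/-- `f/(4π)` is a probability density on `[-3,3]`, its odd moments vanish, and its
even moments are given by the alternating binomial–Catalan sums. -/
theorem batman_moments :
    ((1 / (4 * π)) * ∫ t in (-3 : ℝ)..3, batman t) = 1 ∧
    (∀ m : ℕ, Odd m → (1 / (4 * π)) * ∫ t in (-3 : ℝ)..3, t ^ m * batman t = 0) ∧
    (∀ m : ℕ, Even m →
      (1 / (4 * π)) * ∫ t in (-3 : ℝ)..3, t ^ m * batman t =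
        ∑ i ∈ range (m + 1),
          (-1 : ℝ) ^ i * (m.choose i) *
            (Nat.factorial (2 * i) : ℝ) / (Nat.factorial i * Nat.factorial (i + 1))) := by
  have heven (m : ℕ) (hm : Even m) :
      (1 / (4 * π)) * ∫ t in (-3 : ℝ)..3, t ^ m * batman t =
        ∑ i ∈ range (m + 1),
          (-1 : ℝ) ^ i * (m.choose i) *
            (Nat.factorial (2 * i) : ℝ) / (Nat.factorial i * Nat.factorial (i + 1)) := by
    rw [integral_pow_mul_batman, hm.neg_one_pow, integral_pow_mul_batmanWing,
      integral_cos_sq_mul_four_mul_sin_sq_sub_one_pow hm]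
    field_simp
    ring
  refine ⟨by simpa using heven 0 Even.zero, fun m hm => ?_, heven⟩
  rw [integral_pow_mul_batman, hm.neg_one_pow]
  simp
end
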